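/- arXiv:2210.10852 — 2 statements merged into one kernel-verified Lean document; each statement's English description precedes it below -/
import Mathlib

section
/- Let B ∈ {-1, 1} and let A = (A_1, …, A_p) be a nondegenerate binary vector on the same probability space, with E[B | A] = βᵀ A^⊗ almost surely. Let S ⊆ G_A. If B is conditionally independent of σ(G_A) given σ(S), then β_Λ = 0 for every Λ ∈ G_A \ ⟨S⟩. -/
/-!
Write a sign pattern additively, `x : ι → ZMod 2` standing for `((-1) ^ x i)ᵢ`; the character
`∏ i ∈ T, xᵢ` of the cube is then `walsh T`, the sign of the linear form `coordSum T`.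

Conditional independence makes `E[B | σ(S)]` a version of `E[B | σ(G_A)] = ∑ β_T χ_T(A)`.
Since every atom of `A` has positive mass, the Walsh expansion `F = ∑ β_T walsh T` of the cube
takes the value of `E[B | σ(S)]` at some point of each atom, so `F x` depends on `x` only through
the values `ψ x` of the linear forms `ψ` whose sign along `A` lies in the monoid generated by `S`.
These forms make up a subspace `W`, and `Λ ∉ ⟨S⟩` means `coordSum Λ ∉ W`. By duality some `b` is
killed by `W` but not by `coordSum Λ`: then `F` is invariant under translation by `b` while
`walsh Λ b = -1`, and linear independence of characters gives `β_Λ = -β_Λ`.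
-/

open MeasureTheory

/-- The σ-field generated by a set of real-valued functions. -/
def sigmaGen {Ω : Type*} (S : Set (Ω → ℝ)) : MeasurableSpace Ω :=
  ⨆ g ∈ S, MeasurableSpace.comap g inferInstance

/-- Conditional independence of the σ-fields `m₁` and `m₂` given the σ-field `m`, under `μ`:
for all `m₁`-measurable `s` and `m₂`-measurable `t`,
`E[1_{s ∩ t} | m] = E[1_s | m] · E[1_t | m]` a.e. -/
noncomputable def CondIndepSigma {Ω : Type*} [MeasurableSpace Ω] (μ : Measure Ω)
    (m m₁ m₂ : MeasurableSpace Ω) : Prop :=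
  ∀ s t : Set Ω, MeasurableSet[m₁] s → MeasurableSet[m₂] t →
    μ[(s ∩ t).indicator (fun _ => (1 : ℝ)) | m] =ᵐ[μ]
      fun ω => (μ[s.indicator (fun _ => (1 : ℝ)) | m]) ω *
        (μ[t.indicator (fun _ => (1 : ℝ)) | m]) ω

noncomputable def zmodTwoSign : AddChar (ZMod 2) ℝ :=
  AddChar.zmodChar 2 (by norm_num : (-1 : ℝ) ^ 2 = 1)

@[simp] lemma zmodTwoSign_zero : zmodTwoSign 0 = 1 := AddChar.map_zero_eq_one _

@[simp] lemma zmodTwoSign_one : zmodTwoSign 1 = -1 := by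
  simp [zmodTwoSign, AddChar.zmodChar_apply, ZMod.val_one]

lemma zmodTwoSign_eq_neg_one_of_ne_zero {c : ZMod 2} (hc : c ≠ 0) : zmodTwoSign c = -1 := by
  obtain rfl : c = 1 := by revert c; decide
  exact zmodTwoSign_one

lemma zmodTwoSign_injective : Function.Injective zmodTwoSign :=
  AddChar.injective_iff.2 fun c hc => by
    by_contra h
    rw [zmodTwoSign_eq_neg_one_of_ne_zero h] at hc
    norm_num at hc

lemma zmodTwoSign_eq_neg_one_or_eq_one (c : ZMod 2) : zmodTwoSign c = -1 ∨ zmodTwoSign c = 1 := by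
  rcases eq_or_ne c 0 with rfl | hc
  exacts [Or.inr zmodTwoSign_zero, Or.inl (zmodTwoSign_eq_neg_one_of_ne_zero hc)]

lemma exists_zmodTwoSign_eq {x : ℝ} (hx : x = -1 ∨ x = 1) : ∃ c, zmodTwoSign c = x := by
  rcases hx with rfl | rfl
  exacts [⟨1, zmodTwoSign_one⟩, ⟨0, zmodTwoSign_zero⟩]

lemma AddChar.map_sum_eq_prod {ι A M : Type*} [AddCommMonoid A] [CommMonoid M]
    (ψ : AddChar A M) (s : Finset ι) (f : ι → A) : ψ (∑ i ∈ s, f i) = ∏ i ∈ s, ψ (f i) :=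
  map_prod ψ.toMonoidHom (fun i => Multiplicative.ofAdd (f i)) s

def AddChar.comapSubmodule {n : ℕ} [NeZero n] {V M : Type*} [AddCommGroup V] [Module (ZMod n) V]
    [CommMonoid M] (ψ : AddChar V M) (P : Submonoid M) : Submodule (ZMod n) V where
  carrier := {v | ψ v ∈ P}
  add_mem' {v w} hv hw := by
    change ψ (v + w) ∈ P
    rw [ψ.map_add_eq_mul]
    exact mul_mem hv hw
  zero_mem' := by
    change ψ 0 ∈ P
    rw [ψ.map_zero_eq_one]
    exact one_mem P
  smul_mem' c v hv := by
    change ψ (c • v) ∈ P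
    rw [← ZMod.natCast_zmod_val c, Nat.cast_smul_eq_nsmul, ψ.map_nsmul_eq_pow]
    exact pow_mem hv c.val

@[simp] lemma AddChar.mem_comapSubmodule {n : ℕ} [NeZero n] {V M : Type*} [AddCommGroup V]
    [Module (ZMod n) V] [CommMonoid M] {ψ : AddChar V M} {P : Submonoid M} {v : V} :
    v ∈ (ψ.comapSubmodule P : Submodule (ZMod n) V) ↔ ψ v ∈ P :=
  Iff.rfl

theorem Subspace.exists_apply_ne_zero_of_notMem {K V : Type*} [Field K] [AddCommGroup V]
    [Module K V] [FiniteDimensional K V] {W : Subspace K (Module.Dual K V)}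
    {φ : Module.Dual K V} (hφ : φ ∉ W) : ∃ v ∈ W.dualCoannihilator, φ v ≠ 0 := by
  by_contra! h
  rw [← Subspace.dualCoannihilator_dualAnnihilator_eq (W := W)] at hφ
  exact hφ ((Submodule.mem_dualAnnihilator φ).2 h)

noncomputable def dualSignChar {X V : Type*} [AddCommGroup V] [Module (ZMod 2) V] (a : X → V) :
    AddChar (Module.Dual (ZMod 2) V) (X → ℝ) where
  toFun ψ x := zmodTwoSign (ψ (a x))
  map_zero_eq_one' := by ext; simp
  map_add_eq_mul' ψ ψ' := by ext; simp [AddChar.map_add_eq_mul]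

section Walsh

variable {ι : Type*}

def coordSum (T : Finset ι) : Module.Dual (ZMod 2) (ι → ZMod 2) := ∑ i ∈ T, LinearMap.proj i

@[simp] lemma coordSum_apply (T : Finset ι) (x : ι → ZMod 2) : coordSum T x = ∑ i ∈ T, x i := by
  simp [coordSum]

noncomputable def walsh (T : Finset ι) : AddChar (ι → ZMod 2) ℝ :=
  zmodTwoSign.compAddMonoidHom (coordSum T).toAddMonoidHom

lemma walsh_apply (T : Finset ι) (x : ι → ZMod 2) : walsh T x = zmodTwoSign (coordSum T x) :=
  rfl

lemma walsh_apply_eq_prod (T : Finset ι) (x : ι → ZMod 2) :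
    walsh T x = ∏ i ∈ T, zmodTwoSign (x i) := by
  rw [walsh_apply, coordSum_apply, AddChar.map_sum_eq_prod]

lemma dualSignChar_coordSum {X : Type*} (a : X → ι → ZMod 2) (T : Finset ι) :
    dualSignChar a (coordSum T) = fun x => walsh T (a x) :=
  rfl

variable [DecidableEq ι]

lemma walsh_single (T : Finset ι) (i : ι) :
    walsh T (Pi.single i 1) = if i ∈ T then -1 else 1 := by
  rw [walsh_apply, coordSum_apply, Finset.sum_pi_single']
  split_ifs <;> simp

lemma walsh_injective : Function.Injective (walsh (ι := ι)) := by
  intro T T' h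
  ext i
  have := walsh_single T i ▸ walsh_single T' i ▸ congr($h (Pi.single i 1))
  split_ifs at this <;> simp_all <;> norm_num at this

variable [Fintype ι]

lemma linearIndependent_walsh :
    LinearIndependent ℝ fun T : Finset ι => (walsh T : (ι → ZMod 2) → ℝ) :=
  (AddChar.linearIndependent _ ℝ).comp _ walsh_injective

lemma walsh_coeff_eq_zero_of_forall_add_eq (β : Finset ι → ℝ) {b : ι → ZMod 2} {Λ : Finset ι}
    (hb : walsh Λ b = -1) (h : ∀ x, ∑ T, β T * walsh T (b + x) = ∑ T, β T * walsh T x) :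
    β Λ = 0 := by
  have hcomb : ∑ T, (β T * walsh T b - β T) • (walsh T : (ι → ZMod 2) → ℝ) = 0 := by
    ext x
    simpa [Finset.sum_apply, sub_mul, AddChar.map_add_eq_mul, mul_assoc, sub_eq_zero] using h x
  have hΛ := Fintype.linearIndependent_iff.1 linearIndependent_walsh _ hcomb Λ
  rw [hb] at hΛ
  linarith

lemma walsh_coeff_eq_zero_of_notMem (β : Finset ι → ℝ)
    (W : Submodule (ZMod 2) (Module.Dual (ZMod 2) (ι → ZMod 2))) {Λ : Finset ι}
    (hΛ : coordSum Λ ∉ W)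
    (hβ : ∀ x y, (∀ ψ ∈ W, ψ x = ψ y) → ∑ T, β T * walsh T x = ∑ T, β T * walsh T y) :
    β Λ = 0 := by
  obtain ⟨b, hbW, hbΛ⟩ := Subspace.exists_apply_ne_zero_of_notMem hΛ
  refine walsh_coeff_eq_zero_of_forall_add_eq β (zmodTwoSign_eq_neg_one_of_ne_zero hbΛ)
    fun x => hβ _ _ fun ψ hψ => ?_
  rw [map_add, (Submodule.mem_dualCoannihilator b).1 hbW ψ hψ, zero_add]

end Walsh

section Probability

open Filter

variable {Ω : Type*}

lemma sigmaGen_mono {S T : Set (Ω → ℝ)} (h : S ⊆ T) : sigmaGen S ≤ sigmaGen T :=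
  biSup_mono h

lemma sigmaGen_le_comap (S : Set (Ω → ℝ)) :
    sigmaGen S ≤ MeasurableSpace.pi.comap fun ω (f : S) => (f : Ω → ℝ) ω :=
  iSup₂_le fun f hf => by
    rw [show f = (fun v : S → ℝ => v ⟨f, hf⟩) ∘ fun ω (f : S) => (f : Ω → ℝ) ω from rfl,
      ← MeasurableSpace.comap_comp]
    exact MeasurableSpace.comap_mono (measurable_pi_apply _).comap_le

lemma MeasureTheory.StronglyMeasurable.apply_eq_of_sigmaGen {S : Set (Ω → ℝ)} {g : Ω → ℝ}
    (hg : StronglyMeasurable[sigmaGen S] g) {ω ω' : Ω} (h : ∀ f ∈ S, f ω = f ω') :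
    g ω = g ω' :=
  (hg.mono (sigmaGen_le_comap S)).factorsThrough (funext fun f => h f f.2)

lemma sigmaGen_prod_eq_iSup_comap {ι : Type*} (A : ι → Ω → ℝ) :
    sigmaGen {g | ∃ T : Finset ι, g = fun ω => ∏ i ∈ T, A i ω}
      = ⨆ i, MeasurableSpace.comap (A i) inferInstance := by
  apply le_antisymm
  · refine iSup₂_le fun g ⟨T, hT⟩ => hT ▸ Measurable.comap_le ?_
    exact Finset.measurable_prod T fun i _ => (comap_measurable (A i)).mono
      (le_iSup (fun j => MeasurableSpace.comap (A j) inferInstance) i) le_rfl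
  · refine iSup_le fun i => le_iSup₂_of_le (A i) ⟨{i}, by simp⟩ le_rfl

variable {m m₁ m₂ m0 : MeasurableSpace Ω} {μ : Measure[m0] Ω} [IsFiniteMeasure μ]

lemma condExp_indicator_ae_eq_of_condIndepSigma (hm : m ≤ m₂) (hm₂ : m₂ ≤ m0)
    (hci : CondIndepSigma μ m m₁ m₂) {s : Set Ω} (hs₁ : MeasurableSet[m₁] s)
    (hs : MeasurableSet s) :
    μ[s.indicator (fun _ => (1 : ℝ)) | m] =ᵐ[μ] μ[s.indicator (fun _ => (1 : ℝ)) | m₂] := by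
  have hm0 : m ≤ m0 := hm.trans hm₂
  refine ae_eq_condExp_of_forall_setIntegral_eq hm₂ ((integrable_const 1).indicator hs)
    (fun t _ _ => integrable_condExp.integrableOn) (fun t ht _ => ?_)
    (stronglyMeasurable_condExp.mono hm).aestronglyMeasurable
  set f := μ[s.indicator (fun _ => (1 : ℝ)) | m]
  have ht' : MeasurableSet t := hm₂ t ht
  have hft : t.indicator f = f * t.indicator (fun _ => (1 : ℝ)) := by
    ext ω; by_cases hω : ω ∈ t <;> simp [hω]
  calc ∫ ω in t, f ω ∂μ = ∫ ω, μ[f * t.indicator (fun _ => (1 : ℝ)) | m] ω ∂μ := by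
        rw [integral_condExp hm0, ← hft, integral_indicator ht']
    _ = ∫ ω, f ω * μ[t.indicator (fun _ => (1 : ℝ)) | m] ω ∂μ := by
        refine integral_congr_ae (condExp_mul_of_stronglyMeasurable_left stronglyMeasurable_condExp
          ?_ ((integrable_const 1).indicator ht'))
        rw [← hft]; exact integrable_condExp.indicator ht'
    _ = ∫ ω, (s ∩ t).indicator (fun _ => (1 : ℝ)) ω ∂μ := by
        exact (integral_congr_ae (hci s t hs₁ ht).symm).trans (integral_condExp hm0)
    _ = ∫ ω in t, s.indicator (fun _ => (1 : ℝ)) ω ∂μ := by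
        rw [← integral_indicator ht', Set.inter_comm, Set.indicator_indicator]

lemma condExp_ae_eq_of_condIndepSigma_of_sign (hm : m ≤ m₂) (hm₂ : m₂ ≤ m0) {B : Ω → ℝ}
    (hB : Measurable B) (hB_sign : ∀ ω, B ω = -1 ∨ B ω = 1)
    (hci : CondIndepSigma μ m (MeasurableSpace.comap B inferInstance) m₂) :
    μ[B | m] =ᵐ[μ] μ[B | m₂] := by
  set s := B ⁻¹' {1}
  have hs : MeasurableSet s := hB (measurableSet_singleton 1)
  have hB_eq : B = (2 : ℝ) • s.indicator (fun _ => (1 : ℝ)) - fun _ => 1 := by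
    ext ω
    rcases hB_sign ω with h | h <;> simp [s, Set.indicator, h] <;> norm_num
  have hcondB : ∀ m' ≤ m0, μ[B | m'] =ᵐ[μ]
      (2 : ℝ) • μ[s.indicator (fun _ => (1 : ℝ)) | m'] - fun _ => 1 := fun m' hm' => by
    rw [hB_eq]
    refine (condExp_sub (((integrable_const 1).indicator hs).smul 2) (integrable_const 1)
      m').trans ?_
    rw [condExp_const hm']
    exact (condExp_smul _ _ _).sub EventuallyEq.rfl
  refine (hcondB m (hm.trans hm₂)).trans (EventuallyEq.trans ?_ (hcondB m₂ hm₂).symm)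
  have hs₁ : MeasurableSet[MeasurableSpace.comap B inferInstance] s :=
    ⟨{1}, measurableSet_singleton 1, rfl⟩
  exact ((condExp_indicator_ae_eq_of_condIndepSigma hm hm₂ hci hs₁ hs).const_smul 2).sub
    EventuallyEq.rfl

end Probability

/-- **Conditional independence forces zero BELIEF coefficients** (Theorem 5, part 2).
Let `B ∈ {-1,1}` and let `A = (A_1, …, A_p)` be a nondegenerate binary vector on the same
probability space, with `E[B | A] = βᵀ A^⊗` almost surely.  Let `S ⊆ G_A`.  If `B` is
conditionally independent of `σ(G_A)` given `σ(S)`, then `β_Λ = 0` for every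
`Λ ∈ G_A \ ⟨S⟩`. -/
theorem conditional_independence_forces_zero_belief_slopes
    {Ω : Type*} [MeasurableSpace Ω] (μ : Measure Ω) [IsProbabilityMeasure μ]
    {p : ℕ} (A : Fin p → Ω → ℝ) (B : Ω → ℝ)
    (hAmeas : ∀ i, Measurable (A i)) (hBmeas : Measurable B)
    (hAbin : ∀ i ω, A i ω = -1 ∨ A i ω = 1)
    (hBbin : ∀ ω, B ω = -1 ∨ B ω = 1)
    (hnondeg : ∀ v : Fin p → ℝ, (∀ i, v i = -1 ∨ v i = 1) →
      0 < μ {ω | ∀ i, A i ω = v i})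
    (β : Finset (Fin p) → ℝ)
    (hβ : μ[B | ⨆ i, MeasurableSpace.comap (A i) inferInstance]
      =ᵐ[μ] fun ω => ∑ S : Finset (Fin p), β S * ∏ i ∈ S, A i ω)
    (GA : Set (Ω → ℝ))
    (hGA : GA = {g | ∃ T : Finset (Fin p), g = fun ω => ∏ i ∈ T, A i ω})
    (S : Set (Ω → ℝ)) (hS : S ⊆ GA)
    (hci : CondIndepSigma μ (sigmaGen S) (MeasurableSpace.comap B inferInstance)
      (sigmaGen GA)) :
    ∀ T : Finset (Fin p),
      (fun ω => ∏ i ∈ T, A i ω) ∉ Submonoid.closure S → β T = 0 := by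
  intro Λ hΛ
  choose a ha using fun ω i => exists_zmodTwoSign_eq (hAbin i ω)
  have hprod : ∀ T ω, ∏ i ∈ T, A i ω = walsh T (a ω) := by
    simp [walsh_apply_eq_prod, ha]
  have hGA_le : sigmaGen GA ≤ ‹MeasurableSpace Ω› := by
    rw [hGA, sigmaGen_prod_eq_iSup_comap]
    exact iSup_le fun i => (hAmeas i).comap_le
  set g := μ[B | sigmaGen S]
  have hg : g =ᵐ[μ] fun ω => ∑ T, β T * walsh T (a ω) := by
    refine (condExp_ae_eq_of_condIndepSigma_of_sign (sigmaGen_mono hS) hGA_le hBmeas hBbin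
      hci).trans ?_
    rw [hGA, sigmaGen_prod_eq_iSup_comap]
    simpa only [hprod] using hβ
  have hatom : ∀ x, ∃ ω, a ω = x ∧ g ω = ∑ T, β T * walsh T x := fun x => by
    have hpos := hnondeg _ fun i => zmodTwoSign_eq_neg_one_or_eq_one (x i)
    obtain ⟨ω, hωx, hω⟩ :=
      Measure.exists_mem_of_measure_ne_zero_of_ae hpos.ne' (ae_restrict_of_ae hg)
    obtain rfl : a ω = x := funext fun i => zmodTwoSign_injective ((ha ω i).trans (hωx i))
    exact ⟨ω, rfl, hω⟩
  set W : Submodule (ZMod 2) _ := (dualSignChar a).comapSubmodule (Submonoid.closure S)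
  have hW : ∀ T, coordSum T ∈ W ↔ (fun ω => ∏ i ∈ T, A i ω) ∈ Submonoid.closure S := fun T => by
    simp only [W, AddChar.mem_comapSubmodule, dualSignChar_coordSum, hprod]
  refine walsh_coeff_eq_zero_of_notMem β W ((hW Λ).not.2 hΛ) fun x y hxy => ?_
  obtain ⟨ω, rfl, hω⟩ := hatom x
  obtain ⟨ω', rfl, hω'⟩ := hatom y
  rw [← hω, ← hω']
  refine stronglyMeasurable_condExp.apply_eq_of_sigmaGen fun f hf => ?_
  obtain ⟨T, rfl⟩ := (hGA ▸ hS hf : f ∈ {g | ∃ T : Finset (Fin p), g = _})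
  simp only [hprod, walsh_apply, hxy _ ((hW T).2 (Submonoid.subset_closure hf))]
end

section
/- Let B_1, …, B_n ∈ {-1, 1} and A_1, …, A_n ∈ {-1, 1}^p, and suppose 𝒜ᵀ𝒜 is positive definite. Let β̂ = (𝒜ᵀ𝒜)^{-1} 𝒜ᵀ ℬ be the least squares estimator. Then the following are equivalent: (1) ‖β̂‖_2 = 1; (2) β̂ is a vertex of the hypercube {x ∈ ℝ^{2^p} : ‖H_{2^p} x‖_∞ ≤ 1}, i.e., every entry of H_{2^p} β̂ equals 1 or -1; (3) B_i = β̂ᵀ A_i^⊗ for all 1 ≤ i ≤ n. -/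
/-- The Sylvester Hadamard matrix of size `2^p`, indexed by subsets of `{1, …, p}`. -/
noncomputable def Had (p : ℕ) : Matrix (Finset (Fin p)) (Finset (Fin p)) ℝ :=
  Matrix.of fun S T => (-1 : ℝ) ^ (S ∩ T).card

/-!
Write `N(a) = {j | a j = -1}`. The power vector `a^⊗` is the row of the Sylvester matrix `H`
indexed by `N(a)`, so the rows of `𝒜` are rows of `H` and the fitted values are
`(𝒜 β̂)_i = (H β̂)_{N(A_i)}`. As `H` is invertible, the normal equations say that `(H β̂)_T` is the
mean of the `B_i` over the cell `{i | N(A_i) = T}`, and positive definiteness of `𝒜ᵀ𝒜` forces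
every cell to be nonempty. Hence every entry of `H β̂` lies in `[-1, 1]`, and it is `±1` exactly
when all `B_i` of its cell are equal to it. Finally `HᵀH = 2^p • 1` gives Parseval's identity
`‖H β̂‖² = 2^p ‖β̂‖²`, so `‖β̂‖ = 1` exactly when all `2^p` entries of `H β̂` are `±1`.
-/

open Matrix Finset Function

section LeastSquares

variable {ι κ : Type*} [Fintype ι] [Fintype κ]

theorem transpose_mulVec_sub_mulVec_nonsing_inv_mul_eq_zero [DecidableEq κ] {R : Type*}
    [CommRing R] (A : Matrix ι κ R) (hA : IsUnit (Aᵀ * A).det) (B : ι → R) :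
    Aᵀ *ᵥ (B - A *ᵥ (((Aᵀ * A)⁻¹ * Aᵀ) *ᵥ B)) = 0 := by
  rw [mulVec_sub, mulVec_mulVec, mulVec_mulVec, ← Matrix.mul_assoc,
    mul_nonsing_inv _ hA, Matrix.one_mul, sub_self]

theorem mulVec_injective_of_posDef_transpose_mul {A : Matrix ι κ ℝ} (hA : (Aᵀ * A).PosDef) :
    Injective A.mulVec := by
  intro x y hxy
  by_contra hne
  have hpos := hA.dotProduct_mulVec_pos (sub_ne_zero.2 hne)
  rw [← mulVec_mulVec, mulVec_sub, hxy, sub_self, mulVec_zero, dotProduct_zero] at hpos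
  exact lt_irrefl 0 hpos

end LeastSquares

section Rows

variable {ι κ : Type*} [Fintype κ] [DecidableEq κ]

theorem surjective_of_mulVec_submatrix_injective {K : Type*} [Field K] {H : Matrix κ κ K}
    (hH : IsUnit H) {T : ι → κ} (hinj : Injective (H.submatrix T id).mulVec) : Surjective T := by
  intro k
  by_contra! hk
  obtain ⟨x, hx⟩ := mulVec_surjective_iff_isUnit.2 hH (Pi.single k 1)
  have hx0 : H.submatrix T id *ᵥ x = H.submatrix T id *ᵥ 0 := by
    funext i
    change (H *ᵥ x) (T i) = _
    simp [hx, hk i]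
  have hxk := congrFun hx k
  simp [hinj hx0] at hxk

theorem sum_fiber_sub_eq_zero [Fintype ι] {R : Type*} [CommRing R] {H : Matrix κ κ R}
    (hH : IsUnit H) {T : ι → κ} {B : ι → R} {β : κ → R}
    (hβ : (H.submatrix T id)ᵀ *ᵥ (B - H.submatrix T id *ᵥ β) = 0) (k : κ) :
    ∑ i with T i = k, (B i - (H *ᵥ β) k) = 0 := by
  set w : κ → R := fun k => ∑ i with T i = k, (B i - (H *ᵥ β) k)
  have hw : w ᵥ* H = 0 ᵥ* H := by
    rw [zero_vecMul, ← hβ, mulVec_transpose]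
    funext S
    simp only [vecMul, dotProduct, w, sum_mul]
    rw [← sum_fiberwise univ T]
    refine sum_congr rfl fun k _ => sum_congr rfl fun i hi => ?_
    rw [← (mem_filter.1 hi).2]
    rfl
  exact congrFun (vecMul_injective_of_isUnit hH hw) k

end Rows

section SignMeans

variable {ι : Type*} {s : Finset ι} {b : ι → ℝ} {c : ℝ}

theorem abs_le_one_of_sum_sub_eq_zero (hs : s.Nonempty) (hb : ∀ i ∈ s, |b i| ≤ 1)
    (h : ∑ i ∈ s, (b i - c) = 0) : |c| ≤ 1 := by
  rw [sum_sub_distrib, sum_const, nsmul_eq_mul, sub_eq_zero] at h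
  have hcard : (0 : ℝ) < #s := by exact_mod_cast hs.card_pos
  refine le_of_mul_le_mul_left ?_ hcard
  calc (#s : ℝ) * |c| = |∑ i ∈ s, b i| := by rw [h, abs_mul, Nat.abs_cast]
    _ ≤ ∑ i ∈ s, |b i| := abs_sum_le_sum_abs _ _
    _ ≤ ∑ _i ∈ s, 1 := sum_le_sum hb
    _ = #s * 1 := by simp

theorem eq_of_sum_sub_eq_zero (hb : ∀ i ∈ s, |b i| ≤ 1) (h : ∑ i ∈ s, (b i - c) = 0)
    (hc : c = 1 ∨ c = -1) {i : ι} (hi : i ∈ s) : b i = c := by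
  rcases hc with rfl | rfl
  · have := (sum_eq_zero_iff_of_nonpos fun j hj => sub_nonpos.2 (abs_le.1 (hb j hj)).2).1 h i hi
    linarith
  · have := (sum_eq_zero_iff_of_nonneg fun j hj => sub_nonneg.2 (abs_le.1 (hb j hj)).1).1 h i hi
    linarith

end SignMeans

section Hadamard

variable {κ : Type*} [Fintype κ] [DecidableEq κ] {H : Matrix κ κ ℝ}

theorem isUnit_of_transpose_mul_self_eq_smul_one {c : ℝ} (hc : c ≠ 0) (hH : Hᵀ * H = c • 1) :
    IsUnit H := by
  rw [isUnit_iff_isUnit_det, isUnit_iff_ne_zero]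
  intro h0
  have := congrArg det hH
  rw [det_mul, h0, mul_zero, det_smul, det_one, mul_one] at this
  exact pow_ne_zero _ hc this.symm

theorem sum_mulVec_sq_of_transpose_mul_self_eq_smul_one {c : ℝ} (hH : Hᵀ * H = c • 1)
    (β : κ → ℝ) : ∑ k, (H *ᵥ β) k ^ 2 = c * ∑ k, β k ^ 2 := by
  have : (H *ᵥ β) ⬝ᵥ (H *ᵥ β) = c * (β ⬝ᵥ β) := by
    rw [dotProduct_mulVec, ← mulVec_transpose, mulVec_mulVec, hH, smul_mulVec, one_mulVec,
      smul_dotProduct, smul_eq_mul, dotProduct_comm]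
  simpa only [dotProduct, sq] using this

theorem tfae_of_rows_of_transpose_mul_self_eq_card_smul_one [Nonempty κ] {ι : Type*}
    [Fintype ι] (hH : Hᵀ * H = (Fintype.card κ : ℝ) • 1) {A : Matrix ι κ ℝ} {T : ι → κ}
    (hA : A = H.submatrix T id) (hT : Surjective T) {B : ι → ℝ} (hB : ∀ i, |B i| = 1)
    {β : κ → ℝ} (hβ : Aᵀ *ᵥ (B - A *ᵥ β) = 0) :
    List.TFAE [∑ k, β k ^ 2 = 1, ∀ k, (H *ᵥ β) k = 1 ∨ (H *ᵥ β) k = -1,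
      ∀ i, B i = ∑ k, β k * A i k] := by
  subst hA
  have hcard : (Fintype.card κ : ℝ) ≠ 0 := Nat.cast_ne_zero.2 Fintype.card_ne_zero
  have hcell := sum_fiber_sub_eq_zero (isUnit_of_transpose_mul_self_eq_smul_one hcard hH) hβ
  have hfit : ∀ i, ∑ k, β k * H.submatrix T id i k = (H *ᵥ β) (T i) := fun i =>
    sum_congr rfl fun k _ => mul_comm _ _
  have hle : ∀ k, (H *ᵥ β) k ^ 2 ≤ 1 := by
    intro k
    obtain ⟨i, rfl⟩ := hT k
    exact sq_le_one_iff_abs_le_one _ |>.2 <|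
      abs_le_one_of_sum_sub_eq_zero ⟨i, by simp⟩ (fun j _ => (hB j).le) (hcell _)
  tfae_have 1 ↔ 2 := by
    calc ∑ k, β k ^ 2 = 1 ↔ ∑ k, (H *ᵥ β) k ^ 2 = ∑ _k : κ, 1 := by
          rw [sum_mulVec_sq_of_transpose_mul_self_eq_smul_one hH, sum_const, card_univ,
            nsmul_eq_mul, mul_one, mul_eq_left₀ hcard]
      _ ↔ _ := (sum_eq_sum_iff_of_le fun k _ => hle k).trans <| by
          simp only [mem_univ, true_implies, sq_eq_one_iff]
  tfae_have 2 → 3 := fun h i => by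
    rw [hfit]
    exact eq_of_sum_sub_eq_zero (fun j _ => (hB j).le) (hcell _) (h _) (by simp)
  tfae_have 3 → 2 := fun h k => by
    obtain ⟨i, rfl⟩ := hT k
    rw [← hfit, ← h i, ← abs_eq zero_le_one]
    exact hB i
  tfae_finish

end Hadamard

section Sylvester

variable {p : ℕ}

noncomputable def negSet (a : Fin p → ℝ) : Finset (Fin p) := {j | a j = -1}

theorem Had_isSymm : (Had p).IsSymm := by
  ext S U
  simp [Had, inter_comm]

theorem Had_apply_eq_prod (S U : Finset (Fin p)) :
    Had p S U = ∏ j ∈ U, if j ∈ S then -1 else 1 := by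
  simp [Had, inter_comm]

theorem prod_eq_Had_negSet {a : Fin p → ℝ} (ha : ∀ j, a j = -1 ∨ a j = 1) (S : Finset (Fin p)) :
    ∏ j ∈ S, a j = Had p (negSet a) S := by
  rw [Had_apply_eq_prod]
  refine prod_congr rfl fun j _ => ?_
  rcases ha j with h | h <;> simp [negSet, h]

theorem Had_mul_self_apply (S S' : Finset (Fin p)) :
    (Had p * Had p) S S' = ∏ j, (1 + (if j ∈ S then -1 else 1) * (if j ∈ S' then -1 else 1)) := by
  rw [prod_one_add, powerset_univ, mul_apply]
  refine sum_congr rfl fun U _ => ?_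
  rw [Had_isSymm.apply S' U, Had_apply_eq_prod, Had_apply_eq_prod, prod_mul_distrib]

theorem Had_transpose_mul_self :
    (Had p)ᵀ * Had p = (Fintype.card (Finset (Fin p)) : ℝ) • 1 := by
  rw [Had_isSymm.eq]
  ext S S'
  rw [Had_mul_self_apply, Matrix.smul_apply, one_apply, smul_eq_mul, Fintype.card_finset,
    Fintype.card_fin, Nat.cast_pow, Nat.cast_ofNat]
  split_ifs with h
  · subst h
    have htwo : ∀ j, (1 + (if j ∈ S then -1 else 1) * (if j ∈ S then -1 else 1) : ℝ) = 2 :=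
      fun j => by split_ifs <;> norm_num
    rw [prod_congr rfl fun j _ => htwo j, prod_const, card_univ, Fintype.card_fin, mul_one]
  · obtain ⟨j, hj⟩ : ∃ j, ¬(j ∈ S ↔ j ∈ S') := by
      contrapose! h
      ext j
      exact h j
    rw [mul_zero]
    exact prod_eq_zero (mem_univ j) (by by_cases j ∈ S <;> by_cases j ∈ S' <;> simp_all)

end Sylvester

/-- **Empirical perfect separation** (Theorem 12).
Let `B_1, …, B_n ∈ {-1,1}` and `A_1, …, A_n ∈ {-1,1}^p`, let `𝒜` be the `n × 2^p` design
matrix of power vectors `A_i^⊗`, and suppose `𝒜ᵀ𝒜` is positive definite.  Let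
`β̂ = (𝒜ᵀ𝒜)⁻¹ 𝒜ᵀ ℬ` be the least squares estimator.  Then the following are equivalent:
(1) `‖β̂‖₂ = 1`;
(2) `β̂` is a vertex of the hypercube `{x : ‖H_{2^p} x‖_∞ ≤ 1}`, i.e. every entry of
`H_{2^p} β̂` equals `1` or `-1`;
(3) `B_i = β̂ᵀ A_i^⊗` for all `1 ≤ i ≤ n`. -/
theorem empirical_perfect_separation_tfae
    {n p : ℕ} (Bv : Fin n → ℝ) (Av : Fin n → Fin p → ℝ)
    (hB : ∀ i, Bv i = -1 ∨ Bv i = 1)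
    (hA : ∀ i j, Av i j = -1 ∨ Av i j = 1) :
    letI 𝒜 : Matrix (Fin n) (Finset (Fin p)) ℝ :=
      Matrix.of fun i S => ∏ j ∈ S, Av i j
    ∀ _ : (𝒜.transpose * 𝒜).PosDef,
      letI βhat : Finset (Fin p) → ℝ :=
        ((𝒜.transpose * 𝒜)⁻¹ * 𝒜.transpose).mulVec Bv
      List.TFAE
        [ ∑ S : Finset (Fin p), βhat S ^ 2 = 1,
          ∀ S : Finset (Fin p),
            (Had p).mulVec βhat S = 1 ∨ (Had p).mulVec βhat S = -1,
          ∀ i : Fin n, Bv i = ∑ S : Finset (Fin p), βhat S * ∏ j ∈ S, Av i j ] := by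
  intro hPD
  have h𝒜 : (Matrix.of fun i S => ∏ j ∈ S, Av i j) = (Had p).submatrix (negSet ∘ Av) id := by
    ext i S
    exact prod_eq_Had_negSet (hA i) S
  have hT : Surjective (negSet ∘ Av) :=
    surjective_of_mulVec_submatrix_injective
      (isUnit_of_transpose_mul_self_eq_smul_one (by positivity) Had_transpose_mul_self)
      (h𝒜 ▸ mulVec_injective_of_posDef_transpose_mul hPD)
  exact tfae_of_rows_of_transpose_mul_self_eq_card_smul_one Had_transpose_mul_self h𝒜 hT
    (fun i => (abs_eq zero_le_one).2 (hB i).symm)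
    (transpose_mulVec_sub_mulVec_nonsing_inv_mul_eq_zero _ hPD.det_pos.ne'.isUnit Bv)
end
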